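/- arXiv:2503.03540 — 6 statements merged into one kernel-verified Lean document; each statement's English description precedes it below -/
import Mathlib

section
/- The point (1,0,0,0) is an equilibrium of the system S' = -βS(I+C) + ε(1-S-I-C-H), I' = (1-θ)βS(I+C) - γI·I, C' = θβS(I+C) - γC·C, H' = γC·C - γH·H, and the Jacobian of the system at this point has eigenvalues -ε, -γH, and λ± = ½(β-γI-γC ± √((β-γI-γC)² - 4γIγC(1-R0))) where R0 = β((1-θ)/γI + θ/γC). -/
lemma det4 (a b c d e f g h i j : ℂ) :
    Matrix.det !![a, b, c, d; 0, e, f, 0; 0, g, h, 0; 0, 0, i, j]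
      = a * j * (e * h - f * g) := by
  rw [Matrix.det_succ_column_zero]
  simp [Fin.sum_univ_four, Matrix.det_fin_three, Matrix.vecHead, Matrix.vecTail,
    Fin.succAbove]
  ring


/-- The DFE `(1,0,0,0)` is an equilibrium of the system, and the Jacobian of the
system at this point has eigenvalues `-ε`, `-γH`, and
`λ± = ½(β-γI-γC ± √((β-γI-γC)² - 4γIγC(1-R0)))` (stated over `ℂ`, where `s`
ranges over the complex square roots of the discriminant). A complex number `λ`
is an eigenvalue of a matrix `J` iff `det(J - λ·1) = 0`. -/
theorem stmt_5 (β γI γC γH ε θ : ℝ) (hβ : 0 < β) (hγI : 0 < γI) (hγC : 0 < γC)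
    (hγH : 0 < γH) (hε : 0 < ε) (hθ0 : 0 ≤ θ) (hθ1 : θ ≤ 1) :
    -- (1,0,0,0) is an equilibrium
    (-β * 1 * (0 + 0) + ε * (1 - 1 - 0 - 0 - 0) = 0 ∧
     (1 - θ) * β * 1 * (0 + 0) - γI * 0 = 0 ∧
     θ * β * 1 * (0 + 0) - γC * 0 = 0 ∧
     γC * 0 - γH * 0 = 0) ∧
    -- eigenvalues of the Jacobian at (1,0,0,0)
    ∀ J : Matrix (Fin 4) (Fin 4) ℂ,
      J = !![-(ε:ℂ), -β - ε, -β - ε, -ε;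
             0, (1 - θ) * β - γI, (1 - θ) * β, 0;
             0, θ * β, θ * β - γC, 0;
             0, 0, γC, -γH] →
      (J - (-(ε:ℂ)) • 1).det = 0 ∧
      (J - (-(γH:ℂ)) • 1).det = 0 ∧
      ∀ s : ℂ, s ^ 2 = ((β:ℂ) - γI - γC) ^ 2
          - 4 * γI * γC * (1 - β * ((1 - θ) / γI + θ / γC)) →
        (J - ((((β:ℂ) - γI - γC + s) / 2) • 1)).det = 0 := by
  refine ⟨by norm_num, ?_⟩
  intro J hJ
  have key : ∀ l : ℂ, (J - l • 1).det
      = (-(ε:ℂ) - l) * (-(γH:ℂ) - l)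
        * (((1 - θ) * β - γI - l) * (θ * β - γC - l) - (1 - θ) * β * (θ * β)) := by
    intro l
    have : J - l • 1 = !![-(ε:ℂ) - l, -β - ε, -β - ε, -ε;
        0, (1 - θ) * β - γI - l, (1 - θ) * β, 0;
        0, θ * β, θ * β - γC - l, 0;
        0, 0, γC, -γH - l] := by
      subst hJ
      ext i k
      fin_cases i <;> fin_cases k <;>
        simp [Matrix.one_apply] <;> ring
    rw [this, det4]
  refine ⟨?_, ?_, ?_⟩
  · rw [key]; ring
  · rw [key]; ring
  · intro s hs
    have hI : (γI:ℂ) ≠ 0 := by exact_mod_cast hγI.ne'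
    have hC : (γC:ℂ) ≠ 0 := by exact_mod_cast hγC.ne'
    rw [key]
    have hs' : s ^ 2 = ((β:ℂ) - γI - γC) ^ 2
        - 4 * (γI * γC - (1 - θ) * β * γC - θ * β * γI) := by
      rw [hs]; field_simp; ring
    linear_combination ((-(ε:ℂ) - (β - γI - γC + s)/2) * (-(γH:ℂ) - (β - γI - γC + s)/2)
      / 4) * hs'
end

section
/- If R0 = β((1-θ)/γI + θ/γC) < 1, then both roots of λ² + (γI + γC - β)λ + γIγC(1 - R0) = 0 have strictly negative real part. -/
/-! Since `β ≥ 0` and `(1-θ)/γI + θ/γC ≥ 1/(γI+γC)`, the threshold `R0 < 1` forces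
`β < γI + γC`, so the quadratic has positive coefficients. A monic real quadratic with
positive coefficients has no root with `re z ≥ 0`: the imaginary part of the equation,
`im z · (2 re z + b) = 0`, makes such a root real, and a real `x ≥ 0` gives
`x² + b x + c > 0`. -/

lemma Complex.re_neg_of_sq_add_mul_add_eq_zero {b c : ℝ} (hb : 0 < b) (hc : 0 < c) {z : ℂ}
    (hz : z ^ 2 + b * z + c = 0) : z.re < 0 := by
  have hre : z.re ^ 2 - z.im ^ 2 + b * z.re + c = 0 := by
    simpa [sq] using congrArg Complex.re hz
  have him : z.im * (2 * z.re + b) = 0 := by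
    have := congrArg Complex.im hz
    simp only [sq, Complex.add_im, Complex.mul_im, Complex.ofReal_re, Complex.ofReal_im,
      Complex.zero_im] at this
    linarith
  by_contra! hx
  have hreal : z.im = 0 := (mul_eq_zero.mp him).resolve_right (by positivity)
  rw [hreal] at hre
  nlinarith

lemma one_div_add_le_sub_div_add_div {a b θ : ℝ} (ha : 0 < a) (hb : 0 < b)
    (hθ0 : 0 ≤ θ) (hθ1 : θ ≤ 1) : 1 / (a + b) ≤ (1 - θ) / a + θ / b :=
  calc 1 / (a + b) = (1 - θ) / (a + b) + θ / (a + b) := by ring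
    _ ≤ (1 - θ) / a + θ / b := by
      gcongr <;> linarith

lemma lt_add_of_mul_sub_div_add_div_lt_one {β a b θ : ℝ} (hβ : 0 ≤ β) (ha : 0 < a) (hb : 0 < b)
    (hθ0 : 0 ≤ θ) (hθ1 : θ ≤ 1) (h : β * ((1 - θ) / a + θ / b) < 1) : β < a + b := by
  have hdiv : β / (a + b) < 1 :=
    calc β / (a + b) = β * (1 / (a + b)) := by ring
      _ ≤ β * ((1 - θ) / a + θ / b) := by
        gcongr; exact one_div_add_le_sub_div_add_div ha hb hθ0 hθ1
      _ < 1 := h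
  rwa [div_lt_one (by positivity)] at hdiv

/-- If `R0 = β((1-θ)/γI + θ/γC) < 1`, then both (complex) roots of
`λ² + (γI + γC - β)λ + γIγC(1 - R0) = 0` have strictly negative real part. -/
theorem stmt_7 (β γI γC θ : ℝ) (hβ : 0 < β) (hγI : 0 < γI) (hγC : 0 < γC)
    (hθ0 : 0 ≤ θ) (hθ1 : θ ≤ 1)
    (hR0 : β * ((1 - θ) / γI + θ / γC) < 1) :
    ∀ z : ℂ, z ^ 2 + (↑γI + ↑γC - ↑β) * z
        + ↑γI * ↑γC * (1 - ↑β * ((1 - ↑θ) / ↑γI + ↑θ / ↑γC)) = 0 →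
      z.re < 0 := by
  intro z hz
  have hlinear : 0 < γI + γC - β := by
    linarith [lt_add_of_mul_sub_div_add_div_lt_one hβ.le hγI hγC hθ0 hθ1 hR0]
  have hconst : 0 < γI * γC * (1 - β * ((1 - θ) / γI + θ / γC)) := by
    have : 0 < 1 - β * ((1 - θ) / γI + θ / γC) := by linarith
    positivity
  exact Complex.re_neg_of_sq_add_mul_add_eq_zero hlinear hconst (by push_cast; exact hz)
end

section
/- If R0 > 1, the endemic equilibrium components given by S2 = 1/R0, C2 = ε(1 - 1/R0)·D⁻¹, I2 = ε(1-1/R0)·((1-θ)/θ)·(γC/γI)·D⁻¹, H2 = ε(1-1/R0)·(γC/γH)·D⁻¹ with D = γC/θ + ε(1 + γC/γH + (γC/γI)(1/θ - 1)), constitute an equilibrium of the system S' = -βS(I+C) + ε(1-S-I-C-H), I' = (1-θ)βS(I+C) - γI·I, C' = θβS(I+C) - γC·C, H' = γC·C - γH·H, and all components are strictly positive. -/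
set_option maxHeartbeats 1000000

/-- If `R0 > 1`, the endemic equilibrium `(S2, I2, C2, H2)` given by the stated
formulas is an equilibrium of the system, and all its components are strictly
positive. -/
theorem stmt_10 (β γI γC γH ε θ : ℝ) (hβ : 0 < β) (hγI : 0 < γI) (hγC : 0 < γC)
    (hγH : 0 < γH) (hε : 0 < ε) (hθ0 : 0 < θ) (hθ1 : θ < 1)
    (hR0 : 1 < β * ((1 - θ) / γI + θ / γC))
    (R0 D S2 I2 C2 H2 : ℝ)
    (hR0def : R0 = β * ((1 - θ) / γI + θ / γC))
    (hD : D = γC / θ + ε * (1 + γC / γH + (γC / γI) * (1 / θ - 1)))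
    (hS2 : S2 = 1 / R0)
    (hI2 : I2 = ε * (1 - 1 / R0) * ((1 - θ) / θ) * (γC / γI) * D⁻¹)
    (hC2 : C2 = ε * (1 - 1 / R0) * D⁻¹)
    (hH2 : H2 = ε * (1 - 1 / R0) * (γC / γH) * D⁻¹) :
    (-β * S2 * (I2 + C2) + ε * (1 - S2 - I2 - C2 - H2) = 0 ∧
     (1 - θ) * β * S2 * (I2 + C2) - γI * I2 = 0 ∧
     θ * β * S2 * (I2 + C2) - γC * C2 = 0 ∧
     γC * C2 - γH * H2 = 0) ∧
    (0 < S2 ∧ 0 < I2 ∧ 0 < C2 ∧ 0 < H2) := by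
  have hR0gt : 1 < R0 := by rw [hR0def]; exact hR0
  have hR0pos : 0 < R0 := by linarith
  have hR0ne : R0 ≠ 0 := ne_of_gt hR0pos
  have hθne : θ ≠ 0 := ne_of_gt hθ0
  have hγIne : γI ≠ 0 := ne_of_gt hγI
  have hγCne : γC ≠ 0 := ne_of_gt hγC
  have hγHne : γH ≠ 0 := ne_of_gt hγH
  have hDpos : 0 < D := by
    rw [hD]
    have h3 : 0 ≤ (γC / γI) * (1 / θ - 1) := by
      apply mul_nonneg (le_of_lt (div_pos hγC hγI))
      have : 1 < 1 / θ := by rw [lt_div_iff₀ hθ0]; linarith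
      linarith
    have := div_pos hγC hθ0
    have := div_pos hγC hγH
    nlinarith
  have hDne : D ≠ 0 := ne_of_gt hDpos
  have hfrac : 0 < 1 - 1 / R0 := by
    have : 1 / R0 < 1 := by rw [div_lt_one hR0pos]; exact hR0gt
    linarith
  have hA : R0 * (γI * γC) = β * ((1 - θ) * γC + θ * γI) := by
    rw [hR0def]; field_simp
  have hB : D * (θ * γI * γH)
      = γC * γI * γH + ε * (θ * γI * γH + θ * γI * γC + γC * γH * (1 - θ)) := by
    rw [hD]; field_simp
  have hpos : 0 < S2 ∧ 0 < I2 ∧ 0 < C2 ∧ 0 < H2 := by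
    refine ⟨?_, ?_, ?_, ?_⟩
    · rw [hS2]; positivity
    · rw [hI2]; have h1θ : 0 < 1 - θ := by linarith
      positivity
    · rw [hC2]; positivity
    · rw [hH2]; positivity
  have hpq : 0 < (1 - θ) * γC + θ * γI := by nlinarith
  have hβ' : β = R0 * (γI * γC) / ((1 - θ) * γC + θ * γI) := by
    rw [hA]; field_simp
  have hD' : D = (γC * γI * γH + ε * (θ * γI * γH + θ * γI * γC + γC * γH * (1 - θ))) / (θ * γI * γH) := by
    rw [← hB]; field_simp
  have hN : 0 < γC * γI * γH + ε * (θ * γI * γH + θ * γI * γC + γC * γH * (1 - θ)) := by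
    rw [← hB]; positivity
  generalize hP : (1 - θ) * γC + θ * γI = P at hβ' hpq
  generalize hNd : γC * γI * γH + ε * (θ * γI * γH + θ * γI * γC + γC * γH * (1 - θ)) = N at hD' hN
  have hPne : P ≠ 0 := ne_of_gt hpq
  have hNne : N ≠ 0 := ne_of_gt hN
  subst hS2 hI2 hC2 hH2
  refine ⟨⟨?_, ?_, ?_, ?_⟩, hpos⟩
  · rw [hβ', hD']; field_simp
    subst hP hNd; ring
  · rw [hβ', hD']; field_simp
    subst hP hNd; ring
  · rw [hβ', hD']; field_simp
    subst hP hNd; ring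
  · field_simp
    ring
end

section
/- Let S ≥ 0 and γC ≥ γI > 0, β > 0, θ ∈ [0,1]. The 2×2 matrix [[(1-θ)βS - γI, (1-θ)βS],[θβS, θβS - γC]] has two real eigenvalues λ2 ≤ λ3 given by λ_{2,3} = ½(βS - γI - γC ∓ √((βS - (γC-γI))² + 4(1-θ)β(γC-γI)S)), and λ2 < 0 for all S ≥ 0 (assuming S > 0 or θ < 1 to avoid degeneracy), while λ3 < 0 iff S < 1/R0, λ3 = 0 iff S = 1/R0, and λ3 > 0 iff S > 1/R0, where R0 = β((1-θ)/γI + θ/γC). -/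
/-!
The matrix has trace `t = βS - γI - γC` and determinant `d = γI γC (1 - R₀ S)`, and its
discriminant `t² - 4d` is the displayed radicand, which is nonnegative because `θ ≤ 1` and
`γI ≤ γC`; hence `λ₂ ≤ λ₃` are the roots of `λ² - tλ + d`. If `t ≥ 0` then `βS ≥ γI + γC`,
and since `R₀ ≥ β / γC` this forces `R₀ S > 1`, i.e. `d < 0`; either way `λ₂ < 0`. As
`λ₂ λ₃ = d`, the sign of `λ₃` is the sign of `-d`, that is of `S - 1 / R₀`.
-/

open SignType

theorem Matrix.det_sub_smul_one_fin_two {R : Type*} [CommRing R]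
    (M : Matrix (Fin 2) (Fin 2) R) (x : R) :
    (M - x • 1).det = x ^ 2 - M.trace * x + M.det := by
  simp only [det_fin_two, trace_fin_two, sub_apply, smul_apply, one_apply_eq,
    one_apply_ne (by decide : (0 : Fin 2) ≠ 1), one_apply_ne (by decide : (1 : Fin 2) ≠ 0),
    smul_eq_mul, mul_one, mul_zero, sub_zero]
  ring

theorem sign_eq_sign_of_mul_eq_mul {α : Type*} [Ring α] [LinearOrder α] [IsStrictOrderedRing α]
    {a b x y : α} (ha : 0 < a) (hb : 0 < b) (h : a * x = b * y) : sign x = sign y := by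
  simpa [sign_mul, sign_pos ha, sign_pos hb] using congrArg sign h

section QuadraticRoots

variable {K : Type*} [Field K] {t d s : K}

theorem quadratic_eq_zero_of_eq_half [CharZero K] (hs : s ^ 2 = t ^ 2 - 4 * d) {x : K}
    (hx : x = 1 / 2 * (t - s) ∨ x = 1 / 2 * (t + s)) : x ^ 2 - t * x + d = 0 := by
  rcases hx with rfl | rfl <;> linear_combination hs / 4

theorem half_sub_mul_half_add [CharZero K] (hs : s ^ 2 = t ^ 2 - 4 * d) :
    1 / 2 * (t - s) * (1 / 2 * (t + s)) = d := by
  linear_combination -hs / 4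

theorem half_sub_neg [LinearOrder K] [IsStrictOrderedRing K] (hs : s ^ 2 = t ^ 2 - 4 * d)
    (hs0 : 0 ≤ s) (hd : 0 ≤ t → d < 0) : 1 / 2 * (t - s) < 0 := by
  rcases lt_or_ge t 0 with ht | ht
  · linarith
  · have : t < s := lt_of_pow_lt_pow_left₀ 2 hs0 (by linarith [hd ht])
    linarith

end QuadraticRoots

noncomputable def reproductionNumber (β γI γC θ : ℝ) : ℝ := β * ((1 - θ) / γI + θ / γC)

theorem div_le_reproductionNumber {β γI γC θ : ℝ} (hβ : 0 ≤ β) (hγI : 0 < γI) (hIC : γI ≤ γC)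
    (hθ : θ ≤ 1) : β / γC ≤ reproductionNumber β γI γC θ := by
  have hinv : 1 / γC ≤ 1 / γI := one_div_le_one_div_of_le hγI hIC
  calc β / γC = β * (1 / γC) := by ring
    _ ≤ β * (1 / γC + (1 - θ) * (1 / γI - 1 / γC)) := by
        gcongr
        exact le_add_of_nonneg_right (mul_nonneg (by linarith) (by linarith))
    _ = reproductionNumber β γI γC θ := by unfold reproductionNumber; ring

def icBlock (β γI γC θ S : ℝ) : Matrix (Fin 2) (Fin 2) ℝ :=
  !![(1 - θ) * β * S - γI, (1 - θ) * β * S;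
     θ * β * S, θ * β * S - γC]

section ICBlock

variable (β γI γC θ S : ℝ)

theorem trace_icBlock : (icBlock β γI γC θ S).trace = β * S - γI - γC := by
  simp only [icBlock, Matrix.trace_fin_two_of]
  ring

theorem det_icBlock (hγI : γI ≠ 0) (hγC : γC ≠ 0) :
    (icBlock β γI γC θ S).det = γI * γC * (1 - reproductionNumber β γI γC θ * S) := by
  simp only [icBlock, reproductionNumber, Matrix.det_fin_two_of]
  field_simp
  ring

theorem discrim_icBlock :
    (icBlock β γI γC θ S).trace ^ 2 - 4 * (icBlock β γI γC θ S).det =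
      (β * S - (γC - γI)) ^ 2 + 4 * (1 - θ) * β * (γC - γI) * S := by
  simp only [icBlock, Matrix.trace_fin_two_of, Matrix.det_fin_two_of]
  ring

variable {β γI γC θ S}

theorem discrim_icBlock_nonneg (hβ : 0 ≤ β) (hIC : γI ≤ γC) (hθ : θ ≤ 1) (hS : 0 ≤ S) :
    0 ≤ (β * S - (γC - γI)) ^ 2 + 4 * (1 - θ) * β * (γC - γI) * S := by
  have : 0 ≤ 4 * (1 - θ) * β * (γC - γI) * S := by
    have := sub_nonneg.2 hθ
    have := sub_nonneg.2 hIC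
    positivity
  positivity

theorem det_icBlock_neg_of_trace_nonneg (hβ : 0 < β) (hγI : 0 < γI) (hIC : γI ≤ γC)
    (hθ : θ ≤ 1) (ht : 0 ≤ (icBlock β γI γC θ S).trace) : (icBlock β γI γC θ S).det < 0 := by
  have hγC : 0 < γC := hγI.trans_le hIC
  rw [trace_icBlock] at ht
  have hS : 0 ≤ S := (pos_of_mul_pos_right (by linarith : 0 < β * S) hβ.le).le
  have hR₀S : 1 < reproductionNumber β γI γC θ * S :=
    calc 1 < (γI + γC) / γC := by rw [lt_div_iff₀ hγC]; linarith
      _ ≤ β * S / γC := by gcongr; linarith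
      _ = β / γC * S := by ring
      _ ≤ reproductionNumber β γI γC θ * S := by
        gcongr; exact div_le_reproductionNumber hβ.le hγI hIC hθ
  rw [det_icBlock β γI γC θ S hγI.ne' hγC.ne']
  exact mul_neg_of_pos_of_neg (by positivity) (by linarith)

end ICBlock

theorem stmt_13_general (β γI γC θ S : ℝ) (hβ : 0 < β) (hγI : 0 < γI) (hIC : γI ≤ γC)
    (hθ1 : θ ≤ 1) (hS : 0 ≤ S)
    (M : Matrix (Fin 2) (Fin 2) ℝ)
    (hM : M = !![(1 - θ) * β * S - γI, (1 - θ) * β * S;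
                 θ * β * S, θ * β * S - γC])
    (lam2 lam3 : ℝ)
    (hlam2 : lam2 = (1 / 2) * (β * S - γI - γC -
      Real.sqrt ((β * S - (γC - γI)) ^ 2 + 4 * (1 - θ) * β * (γC - γI) * S)))
    (hlam3 : lam3 = (1 / 2) * (β * S - γI - γC +
      Real.sqrt ((β * S - (γC - γI)) ^ 2 + 4 * (1 - θ) * β * (γC - γI) * S))) :
    (M - lam2 • 1).det = 0 ∧ (M - lam3 • 1).det = 0 ∧ lam2 ≤ lam3 ∧
    ((0 < S ∨ θ < 1) → lam2 < 0) ∧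
    (lam3 < 0 ↔ S < 1 / (β * ((1 - θ) / γI + θ / γC))) ∧
    (lam3 = 0 ↔ S = 1 / (β * ((1 - θ) / γI + θ / γC))) ∧
    (0 < lam3 ↔ 1 / (β * ((1 - θ) / γI + θ / γC)) < S) := by
  obtain rfl : M = icBlock β γI γC θ S := hM
  have hγC : 0 < γC := hγI.trans_le hIC
  set R₀ := reproductionNumber β γI γC θ
  have hR₀ : 0 < R₀ := (div_pos hβ hγC).trans_le (div_le_reproductionNumber hβ.le hγI hIC hθ1)
  set s := √((β * S - (γC - γI)) ^ 2 + 4 * (1 - θ) * β * (γC - γI) * S)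
  have hs0 : 0 ≤ s := Real.sqrt_nonneg _
  have hs : s ^ 2 = (icBlock β γI γC θ S).trace ^ 2 - 4 * (icBlock β γI γC θ S).det := by
    rw [Real.sq_sqrt (discrim_icBlock_nonneg hβ.le hIC hθ1 hS), discrim_icBlock]
  rw [← trace_icBlock β γI γC θ S] at hlam2 hlam3
  have hl2 : lam2 < 0 :=
    hlam2 ▸ half_sub_neg hs hs0 (det_icBlock_neg_of_trace_nonneg hβ hγI hIC hθ1)
  have hsign : sign lam3 = sign (S - 1 / R₀) := by
    refine sign_eq_sign_of_mul_eq_mul (neg_pos.2 hl2) (by positivity : 0 < γI * γC * R₀) ?_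
    rw [neg_mul, hlam2, hlam3, half_sub_mul_half_add hs,
      det_icBlock β γI γC θ S hγI.ne' hγC.ne']
    field_simp
    ring
  refine ⟨?_, ?_, by linarith, fun _ ↦ hl2, ?_, ?_, ?_⟩
  · rw [Matrix.det_sub_smul_one_fin_two]; exact quadratic_eq_zero_of_eq_half hs (.inl hlam2)
  · rw [Matrix.det_sub_smul_one_fin_two]; exact quadratic_eq_zero_of_eq_half hs (.inr hlam3)
  · rw [← sign_eq_neg_one_iff, hsign, sign_eq_neg_one_iff, sub_neg]; rfl
  · rw [← sign_eq_zero_iff, hsign, sign_eq_zero_iff, sub_eq_zero]; rfl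
  · rw [← sign_eq_one_iff, hsign, sign_eq_one_iff, sub_pos]; rfl

/-- For `S ≥ 0`, `0 < γI ≤ γC`, `β > 0`, `θ ∈ [0,1]`, the matrix
`[[(1-θ)βS - γI, (1-θ)βS],[θβS, θβS - γC]]` has two real eigenvalues
`lam2 ≤ lam3` given by
`λ_{2,3} = ½(βS - γI - γC ∓ √((βS - (γC-γI))² + 4(1-θ)β(γC-γI)S))`;
`lam2 < 0` always (assuming `S > 0` or `θ < 1`), and the sign of `lam3` is
determined by the position of `S` relative to `1/R0`,
`R0 = β((1-θ)/γI + θ/γC)`. Here `λ` is an eigenvalue of `M` iff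
`det(M - λ·1) = 0`. -/
theorem stmt_13 (β γI γC θ S : ℝ) (hβ : 0 < β) (hγI : 0 < γI) (hIC : γI ≤ γC)
    (hθ0 : 0 ≤ θ) (hθ1 : θ ≤ 1) (hS : 0 ≤ S)
    (M : Matrix (Fin 2) (Fin 2) ℝ)
    (hM : M = !![(1 - θ) * β * S - γI, (1 - θ) * β * S;
                 θ * β * S, θ * β * S - γC])
    (lam2 lam3 : ℝ)
    (hlam2 : lam2 = (1 / 2) * (β * S - γI - γC -
      Real.sqrt ((β * S - (γC - γI)) ^ 2 + 4 * (1 - θ) * β * (γC - γI) * S)))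
    (hlam3 : lam3 = (1 / 2) * (β * S - γI - γC +
      Real.sqrt ((β * S - (γC - γI)) ^ 2 + 4 * (1 - θ) * β * (γC - γI) * S))) :
    (M - lam2 • 1).det = 0 ∧ (M - lam3 • 1).det = 0 ∧ lam2 ≤ lam3 ∧
    ((0 < S ∨ θ < 1) → lam2 < 0) ∧
    (lam3 < 0 ↔ S < 1 / (β * ((1 - θ) / γI + θ / γC))) ∧
    (lam3 = 0 ↔ S = 1 / (β * ((1 - θ) / γI + θ / γC))) ∧
    (0 < lam3 ↔ 1 / (β * ((1 - θ) / γI + θ / γC)) < S) :=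
  stmt_13_general β γI γC θ S hβ hγI hIC hθ1 hS M hM lam2 lam3 hlam2 hlam3
end

section
/- Let β > γ > 0 and S0 ∈ (0, γ/β). The equation (β-γ)τ - β(1-S0)(1-exp(-τ)) = 0 has exactly one solution τ_E > 0. -/
/-- Two distinct positive roots are impossible, by strict convexity of `exp`. -/
lemma stmt_17_aux (β γ S0 : ℝ) (hγ : 0 < γ) (hβγ : γ < β)
    (hS0 : S0 ∈ Set.Ioo 0 (γ / β)) (a b : ℝ) (ha : 0 < a) (hab : a < b)
    (hga : (β - γ) * a - β * (1 - S0) * (1 - Real.exp (-a)) = 0)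
    (hgb : (β - γ) * b - β * (1 - S0) * (1 - Real.exp (-b)) = 0) : False := by
  have hβ : 0 < β := hγ.trans hβγ
  have hS1 : S0 < 1 := hS0.2.trans_le (by rw [div_le_one hβ]; linarith)
  have hc0 : 0 < β * (1 - S0) := by nlinarith
  have hb : 0 < b := ha.trans hab
  set θ : ℝ := a / b with hθdef
  have hθ0 : 0 < θ := div_pos ha hb
  have hθ1 : θ < 1 := (div_lt_one hb).mpr hab
  have hθb : θ * b = a := div_mul_cancel₀ a hb.ne'
  have hconv := strictConvexOn_exp.2 (Set.mem_univ (0 : ℝ)) (Set.mem_univ (-b))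
    (by intro h; exact hb.ne' (by linarith [neg_eq_zero.mp h.symm]))
    (by linarith : (0:ℝ) < 1 - θ) hθ0 (by ring)
  simp only [smul_eq_mul, mul_zero, zero_add, mul_one, Real.exp_zero, mul_neg] at hconv
  rw [hθb] at hconv
  -- hconv : Real.exp (-a) < (1 - θ) + θ * Real.exp (-b)
  nlinarith [mul_lt_mul_of_pos_left hconv hc0, mul_pos hθ0 hc0,
    mul_lt_mul_of_pos_left hθ1 hc0]

/-- Let `β > γ > 0` and `S0 ∈ (0, γ/β)`. The equation
`(β-γ)τ - β(1-S0)(1-exp(-τ)) = 0` has exactly one solution `τ_E > 0`. -/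
theorem stmt_17 (β γ S0 : ℝ) (hγ : 0 < γ) (hβγ : γ < β)
    (hS0 : S0 ∈ Set.Ioo 0 (γ / β)) :
    ∃! τ : ℝ, 0 < τ ∧ (β - γ) * τ - β * (1 - S0) * (1 - Real.exp (-τ)) = 0 := by
  have hβ : 0 < β := hγ.trans hβγ
  have hS1 : S0 < 1 := hS0.2.trans_le (by rw [div_le_one hβ]; linarith)
  set c : ℝ := β * (1 - S0) with hcdef
  have hc0 : 0 < c := by nlinarith
  set g : ℝ → ℝ := fun t => (β - γ) * t - c * (1 - Real.exp (-t)) with hgdef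
  have hg0 : g 0 = 0 := by simp [hgdef]
  -- derivative of g at 0 is β*S0 - γ < 0
  have hd : HasDerivAt g (β - γ - c) 0 := by
    have he : HasDerivAt (fun t : ℝ => Real.exp (-t)) (-1) 0 := by
      exact ((Real.hasDerivAt_exp (-0)).comp 0 (hasDerivAt_neg (0:ℝ))).congr_deriv (by simp)
    have h2 := (((hasDerivAt_id (0:ℝ)).const_mul (β - γ)).sub
      (((hasDerivAt_const (0:ℝ) (1:ℝ)).sub he).const_mul c))
    exact h2.congr_deriv (by ring)
  have hdneg : β - γ - c < 0 := by
    have : β * S0 < γ := by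
      have := hS0.2
      calc β * S0 < β * (γ / β) := by nlinarith [hS0.2]
        _ = γ := by field_simp
    simp only [hcdef]; nlinarith
  -- find t1 > 0 with g t1 < 0
  have hslope := hasDerivAt_iff_tendsto_slope.mp hd
  have hev : ∀ᶠ t in nhdsWithin 0 {(0:ℝ)}ᶜ, slope g 0 t < 0 :=
    hslope.eventually (gt_mem_nhds hdneg)
  have hle : nhdsWithin (0:ℝ) (Set.Ioi 0) ≤ nhdsWithin 0 {(0:ℝ)}ᶜ :=
    nhdsWithin_mono _ (fun x hx => ne_of_gt hx)
  have hev' : ∀ᶠ t in nhdsWithin (0:ℝ) (Set.Ioi 0), slope g 0 t < 0 ∧ 0 < t :=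
    (hev.filter_mono hle).and (eventually_mem_nhdsWithin)
  obtain ⟨t1, ht1s, ht1p⟩ := hev'.exists
  have hgt1 : g t1 < 0 := by
    have hs : slope g 0 t1 = g t1 / t1 := by simp [slope_def_field, hg0]
    rw [hs] at ht1s
    exact ((div_neg_iff.mp ht1s).resolve_left (fun h => absurd ht1p (asymm h.2))).1
  -- find t2 > t1 with g t2 > 0
  set t2 : ℝ := max (t1 + 1) ((c + 1) / (β - γ)) with ht2def
  have hβγ' : 0 < β - γ := by linarith
  have ht12 : t1 < t2 := lt_of_lt_of_le (by linarith) (le_max_left _ _)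
  have hgt2 : 0 < g t2 := by
    have h1 : (c + 1) / (β - γ) ≤ t2 := le_max_right _ _
    have h2 : c + 1 ≤ (β - γ) * t2 := by
      rw [div_le_iff₀ hβγ'] at h1; linarith [h1]
    have h3 : c * (1 - Real.exp (-t2)) ≤ c := by
      nlinarith [Real.exp_pos (-t2)]
    simp only [hgdef]; linarith
  -- IVT
  have hcont : ContinuousOn g (Set.Icc t1 t2) := by
    apply Continuous.continuousOn; simp only [hgdef]; continuity
  have hsub := intermediate_value_Ioo ht12.le hcont
  have h0mem : (0:ℝ) ∈ Set.Ioo (g t1) (g t2) := ⟨hgt1, hgt2⟩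
  obtain ⟨τ, hτmem, hτ⟩ := hsub h0mem
  have hτpos : 0 < τ := lt_trans ht1p hτmem.1
  refine ⟨τ, ⟨hτpos, hτ⟩, ?_⟩
  rintro y ⟨hy0, hy⟩
  by_contra hne
  rcases lt_or_gt_of_ne hne with h | h
  · exact stmt_17_aux β γ S0 hγ hβγ hS0 y τ hy0 h hy hτ
  · exact stmt_17_aux β γ S0 hγ hβγ hS0 τ y hτpos h hτ hy
end

section
/- Let 0 < γI < γC < β with β < γC²/γI. Then the function f(θ) = θ(1 - 1/R0(θ)) with R0(θ) = β((1-θ)/γI + θ/γC) attains its maximum on [0,1] at the interior point θ̃ = (γC/(γC-γI))(1 - √(γI/β)), which satisfies 0 < θ̃ < 1. Moreover f'(θ) ≤ 0 exactly when (γC/(γC-γI))(1 - √(γI/β)) ≤ θ ≤ (γC/(γC-γI))(1 + √(γI/β)). -/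
set_option maxHeartbeats 1600000 in
/-- Let `0 < γI < γC < β` with `β < γC²/γI`. Then
`f(θ) = θ(1 - 1/R0(θ))`, `R0(θ) = β((1-θ)/γI + θ/γC)`, attains its maximum on
`[0,1]` at the interior point `θ̃ = (γC/(γC-γI))(1 - √(γI/β)) ∈ (0,1)`, and for
`θ ∈ [0,1]`, `f'(θ) ≤ 0` exactly when
`(γC/(γC-γI))(1 - √(γI/β)) ≤ θ ≤ (γC/(γC-γI))(1 + √(γI/β))`. -/
theorem stmt_18 (β γI γC : ℝ) (hγI : 0 < γI) (hIC : γI < γC) (hCβ : γC < β)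
    (hβ : β < γC ^ 2 / γI)
    (f : ℝ → ℝ)
    (hf : f = fun θ : ℝ => θ * (1 - 1 / (β * ((1 - θ) / γI + θ / γC))))
    (θt : ℝ) (hθt : θt = γC / (γC - γI) * (1 - Real.sqrt (γI / β))) :
    θt ∈ Set.Ioo (0:ℝ) 1 ∧
    IsMaxOn f (Set.Icc 0 1) θt ∧
    (∀ θ ∈ Set.Icc (0:ℝ) 1, deriv f θ ≤ 0 ↔
      (γC / (γC - γI) * (1 - Real.sqrt (γI / β)) ≤ θ ∧
       θ ≤ γC / (γC - γI) * (1 + Real.sqrt (γI / β)))) := by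
  have hγC0 : 0 < γC := hγI.trans hIC
  have hβ0 : 0 < β := hγC0.trans hCβ
  have hIB : γI < β := hIC.trans hCβ
  have hCI : 0 < γC - γI := sub_pos.mpr hIC
  have hI : γI ≠ 0 := ne_of_gt hγI
  have hC : γC ≠ 0 := ne_of_gt hγC0
  set s := Real.sqrt (γI / β) with hs_def
  have hs0 : 0 < s := Real.sqrt_pos.mpr (by positivity)
  have hs2 : s ^ 2 = γI / β := Real.sq_sqrt (by positivity)
  have hs1 : s < 1 := by nlinarith [(div_lt_one hβ0).mpr hIB]
  have hsb : γI = β * s ^ 2 := by rw [hs2]; field_simp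
  set g : ℝ → ℝ := fun θ => β * ((1 - θ) / γI + θ / γC) with hg_def
  have hgpos : ∀ θ : ℝ, θ ≤ 1 → 0 < g θ := by
    intro θ hθ1
    have h1 : (1 - θ) / γC ≤ (1 - θ) / γI :=
      div_le_div_of_nonneg_left (by linarith) hγI hIC.le |>.trans_eq rfl
    have h3 : (1 - θ) / γC + θ / γC = 1 / γC := by field_simp; ring
    have h4 : 1 / γC ≤ (1 - θ) / γI + θ / γC := by linarith
    have h5 : (0:ℝ) < β * (1 / γC) := by positivity
    show 0 < β * ((1 - θ) / γI + θ / γC)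
    nlinarith
  -- derivative formula
  have hderiv : ∀ θ : ℝ, g θ ≠ 0 → HasDerivAt f (1 - (β / γI) / (g θ) ^ 2) θ := by
    intro θ hgne
    have hgd : HasDerivAt g (β * (-1 / γI + 1 / γC)) θ := by
      have h1 : HasDerivAt (fun θ : ℝ => (1 - θ) / γI) (-1 / γI) θ := by
        simpa using ((hasDerivAt_id θ).const_sub 1).div_const γI
      have h2 : HasDerivAt (fun θ : ℝ => θ / γC) (1 / γC) θ := by
        simpa using (hasDerivAt_id θ).div_const γC
      simpa using (h1.add h2).const_mul β
    have hinv : HasDerivAt (fun θ => (g θ)⁻¹) (-(β * (-1 / γI + 1 / γC)) / (g θ) ^ 2) θ :=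
      hgd.inv hgne
    have hmain : HasDerivAt (fun θ : ℝ => θ * (1 - (g θ)⁻¹))
        (1 * (1 - (g θ)⁻¹) + θ * (0 - -(β * (-1 / γI + 1 / γC)) / (g θ) ^ 2)) θ :=
      (hasDerivAt_id θ).mul ((hasDerivAt_const θ 1).sub hinv)
    have hfe : f = fun θ : ℝ => θ * (1 - (g θ)⁻¹) := by
      rw [hf]; funext x; rw [one_div]
    rw [hfe]
    convert hmain using 1
    set G := g θ with hG
    set A := β / γI with hA
    set B := β * (-1 / γI + 1 / γC) with hB
    have hAB : G = A + θ * B := by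
      show β * ((1 - θ) / γI + θ / γC) = _
      rw [hA, hB]; field_simp; ring
    have hGsq : G⁻¹ = G / G ^ 2 := by
      rw [pow_two, div_mul_eq_div_div, div_self hgne, one_div]
    rw [hGsq, hAB]
    ring
  -- value of g at θt
  have hgθt : g θt = β * s / γI := by
    show β * ((1 - θt) / γI + θt / γC) = β * s / γI
    rw [hθt]
    field_simp
    ring
  have hgθt_sq : (g θt) ^ 2 = β / γI := by
    rw [hgθt, div_pow, mul_pow, hs2]
    field_simp
  -- linear slope of g
  have hglin : ∀ x y : ℝ, g y - g x = (β * (γC - γI) / (γI * γC)) * (x - y) := by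
    intro x y
    show β * ((1 - y) / γI + y / γC) - β * ((1 - x) / γI + x / γC) = _
    field_simp
    ring
  have hK : 0 < β * (γC - γI) / (γI * γC) := by positivity
  have hmono : ∀ x y : ℝ, g x ≤ g y ↔ y ≤ x := by
    intro x y
    rw [← sub_nonneg, hglin x y]
    constructor
    · intro h; nlinarith
    · intro h; exact mul_nonneg hK.le (by linarith)
  -- θt ∈ (0,1)
  have hθt0 : 0 < θt := by
    rw [hθt]
    have h1 : 0 < 1 - s := by linarith
    positivity
  have hβγI : β * γI < γC ^ 2 := by
    rw [lt_div_iff₀ hγI] at hβ; linarith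
  have hbsC : β * s < γC := by
    nlinarith [mul_pos hβ0 hs0]
  have hγCs : γI < γC * s := by
    nlinarith [mul_pos hs0 (sub_pos.mpr hbsC)]
  have hθt1 : θt < 1 := by
    have h : θt = γC * (1 - s) / (γC - γI) := by rw [hθt]; ring
    rw [h, div_lt_one hCI]
    nlinarith
  -- the iff for the derivative sign, restricted to θ ≤ 1
  have hiff : ∀ θ : ℝ, θ ≤ 1 → (deriv f θ ≤ 0 ↔ θt ≤ θ) := by
    intro θ hθ1
    have hgθ : 0 < g θ := hgpos θ hθ1
    have hgt : 0 < g θt := hgpos θt hθt1.le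
    rw [(hderiv θ hgθ.ne').deriv]
    constructor
    · intro h
      have h2 : (g θ) ^ 2 ≤ β / γI := by
        by_contra hcon
        push_neg at hcon
        have : (β / γI) / (g θ) ^ 2 < 1 := by
          rw [div_lt_one (by positivity)]
          exact hcon
        linarith
      have h3 : (g θ) ^ 2 ≤ (g θt) ^ 2 := by rw [hgθt_sq]; exact h2
      have h4 : g θ ≤ g θt := by nlinarith
      exact (hmono θ θt).mp h4
    · intro h
      have h4 : g θ ≤ g θt := (hmono θ θt).mpr h
      have h3 : (g θ) ^ 2 ≤ β / γI := by rw [← hgθt_sq]; nlinarith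
      have h5 : (1:ℝ) ≤ (β / γI) / (g θ) ^ 2 := by
        rw [le_div_iff₀ (by positivity)]; linarith
      linarith
  -- upper endpoint exceeds 1
  have hθt2 : (1:ℝ) ≤ γC / (γC - γI) * (1 + s) := by
    rw [div_mul_eq_mul_div, le_div_iff₀ hCI]
    nlinarith
  refine ⟨⟨hθt0, hθt1⟩, ?_, ?_⟩
  · -- IsMaxOn
    have hdiffat : ∀ x : ℝ, x ≤ 1 → DifferentiableAt ℝ f x := fun x hx =>
      (hderiv x (hgpos x hx).ne').differentiableAt
    have hcont : ContinuousOn f (Set.Icc 0 1) := fun x hx =>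
      ((hdiffat x hx.2).continuousAt).continuousWithinAt
    have hmax1 : MonotoneOn f (Set.Icc 0 θt) := by
      apply monotoneOn_of_deriv_nonneg (convex_Icc 0 θt)
          (hcont.mono (Set.Icc_subset_Icc le_rfl hθt1.le))
      · intro x hx
        rw [interior_Icc] at hx
        exact (hdiffat x (hx.2.trans hθt1).le).differentiableWithinAt
      · intro x hx
        rw [interior_Icc] at hx
        by_contra hcon
        push_neg at hcon
        exact absurd ((hiff x (hx.2.trans hθt1).le).mp hcon.le) (not_le.mpr hx.2)
    have hmax2 : AntitoneOn f (Set.Icc θt 1) := by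
      apply antitoneOn_of_deriv_nonpos (convex_Icc θt 1)
          (hcont.mono (Set.Icc_subset_Icc hθt0.le le_rfl))
      · intro x hx
        rw [interior_Icc] at hx
        exact (hdiffat x hx.2.le).differentiableWithinAt
      · intro x hx
        rw [interior_Icc] at hx
        exact (hiff x hx.2.le).mpr hx.1.le
    rw [isMaxOn_iff]
    intro x hx
    rcases le_total x θt with h | h
    · exact hmax1 ⟨hx.1, h⟩ ⟨hθt0.le, le_rfl⟩ h
    · exact hmax2 ⟨le_rfl, hθt1.le⟩ ⟨h, hx.2⟩ h
  · intro θ hθ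
    rw [← hθt, hiff θ hθ.2]
    constructor
    · intro h
      exact ⟨h, hθ.2.trans hθt2⟩
    · exact fun h => h.1
end
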